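/- arXiv:2207.06918 — 3 statements merged into one kernel-verified Lean document; each statement's English description precedes it below -/
import Mathlib

section
/- For α > 2 and constants a > 0, the integral over ℝ² of 1 − (p/(1 + a·‖x‖^{−α}) + 1 − p) dx equals p · π a^{2/α} Γ(1 + 2/α) Γ(1 − 2/α). -/
/-!
Away from the origin the integrand equals `p a / (‖x‖ ^ α + a)`, so in polar coordinates the
integral is `2π p a ∫₀^∞ r / (r ^ α + a) dr`. The substitutions `r = a^{1/α} s`, `t = s ^ α` and
`u = t / (1 + t)` turn this into the Beta integral `B(2/α, 1 - 2/α) = Γ(2/α) Γ(1 - 2/α)`.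
-/

open MeasureTheory Real Set

namespace Real

theorem integral_Ioo_rpow_mul_one_sub_rpow {u v : ℝ} (hu : 0 < u) (hv : 0 < v) :
    ∫ t in Ioo (0 : ℝ) 1, t ^ (u - 1) * (1 - t) ^ (v - 1) = Gamma u * Gamma v / Gamma (u + v) := by
  have hbeta : Complex.betaIntegral u v =
      ((∫ t in Ioo (0 : ℝ) 1, t ^ (u - 1) * (1 - t) ^ (v - 1) : ℝ) : ℂ) := by
    rw [Complex.betaIntegral, intervalIntegral.integral_of_le zero_le_one,
      integral_Ioc_eq_integral_Ioo, ← integral_complex_ofReal]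
    refine setIntegral_congr_fun measurableSet_Ioo fun t ⟨ht0, ht1⟩ => ?_
    push_cast
    rw [Complex.ofReal_cpow ht0.le, Complex.ofReal_cpow (sub_nonneg.2 ht1.le)]
    push_cast
    rfl
  have h := Complex.betaIntegral_eq_Gamma_mul_div u v (by simpa using hu) (by simpa using hv)
  rw [hbeta, ← Complex.ofReal_add, Complex.Gamma_ofReal, Complex.Gamma_ofReal,
    Complex.Gamma_ofReal] at h
  exact_mod_cast h

end Real

theorem image_div_one_add_Ioi : (fun t : ℝ => t / (1 + t)) '' Ioi 0 = Ioo 0 1 := by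
  ext s
  constructor
  · rintro ⟨t, ht, rfl⟩
    have ht' : (0 : ℝ) < 1 + t := by linarith [mem_Ioi.mp ht]
    exact ⟨div_pos ht ht', (div_lt_one ht').mpr (by linarith)⟩
  · rintro ⟨hs0, hs1⟩
    refine ⟨s / (1 - s), div_pos hs0 (by linarith), ?_⟩
    have : 1 - s ≠ 0 := by linarith
    field_simp
    ring

theorem strictMonoOn_div_one_add : StrictMonoOn (fun t : ℝ => t / (1 + t)) (Ioi 0) := by
  intro x hx y hy hxy
  have hx' : (0 : ℝ) < 1 + x := by linarith [mem_Ioi.mp hx]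
  have hy' : (0 : ℝ) < 1 + y := by linarith [mem_Ioi.mp hy]
  rw [div_lt_div_iff₀ hx' hy']
  nlinarith

theorem hasDerivAt_div_one_add {t : ℝ} (ht : 1 + t ≠ 0) :
    HasDerivAt (fun t : ℝ => t / (1 + t)) ((1 + t) ^ 2)⁻¹ t := by
  refine ((hasDerivAt_id' t).div ((hasDerivAt_id' t).const_add 1) ht).congr_deriv ?_
  field_simp
  ring

theorem integral_Ioi_rpow_div_one_add_rpow {u v : ℝ} (hu : 0 < u) (hv : 0 < v) :
    ∫ t in Ioi (0 : ℝ), t ^ (u - 1) / (1 + t) ^ (u + v) = Gamma u * Gamma v / Gamma (u + v) := by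
  rw [← integral_Ioo_rpow_mul_one_sub_rpow hu hv, ← image_div_one_add_Ioi,
    integral_image_eq_integral_abs_deriv_smul measurableSet_Ioi
      (fun t ht => (hasDerivAt_div_one_add (by linarith [mem_Ioi.mp ht])).hasDerivWithinAt)
      strictMonoOn_div_one_add.injOn]
  refine setIntegral_congr_fun measurableSet_Ioi fun t ht => ?_
  have ht0 : 0 < t := ht
  have hpos : 0 < 1 + t := by linarith
  have hsub : 1 - t / (1 + t) = (1 + t)⁻¹ := by field_simp; ring
  have hsplit : (1 + t) ^ (u + v) = (1 + t) ^ (u - 1) * (1 + t) ^ (v - 1) * (1 + t) ^ 2 := by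
    rw [← rpow_add hpos, ← rpow_natCast, ← rpow_add hpos]
    congr 1
    push_cast
    ring
  simp only [smul_eq_mul, hsub]
  rw [abs_of_pos (by positivity), div_rpow ht0.le hpos.le, inv_rpow hpos.le, hsplit]
  have : (1 + t) ^ (u - 1) ≠ 0 := (rpow_pos_of_pos hpos _).ne'
  have : (1 + t) ^ (v - 1) ≠ 0 := (rpow_pos_of_pos hpos _).ne'
  field_simp

theorem integral_Ioi_rpow_div_rpow_add_one {α β : ℝ} (hβ : 0 < β) (hβα : β < α) :
    ∫ x in Ioi (0 : ℝ), x ^ (β - 1) / (x ^ α + 1) =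
      Gamma (β / α) * Gamma (1 - β / α) / α := by
  have hα : 0 < α := hβ.trans hβα
  set u := β / α
  have hu : 0 < u := div_pos hβ hα
  have hv : 0 < 1 - u := sub_pos.2 ((div_lt_one hα).2 hβα)
  have hsubst := integral_comp_rpow_Ioi_of_pos
    (g := fun t : ℝ => α⁻¹ * (t ^ (u - 1) / (1 + t) ^ (u + (1 - u)))) hα
  rw [integral_const_mul, integral_Ioi_rpow_div_one_add_rpow hu hv, add_sub_cancel,
    Gamma_one, div_one] at hsubst
  rw [div_eq_inv_mul, ← hsubst]
  refine setIntegral_congr_fun measurableSet_Ioi fun x hx => ?_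
  have hx0 : 0 < x := hx
  have hpow : x ^ (α - 1) * (x ^ α) ^ (u - 1) = x ^ (β - 1) := by
    rw [← rpow_mul hx0.le, ← rpow_add hx0]
    congr 1
    linear_combination mul_div_cancel₀ β hα.ne'
  simp only [smul_eq_mul, rpow_one]
  rw [add_comm (x ^ α) 1, ← hpow]
  field_simp

theorem integral_Ioi_rpow_div_rpow_add {α β c : ℝ} (hβ : 0 < β) (hβα : β < α) (hc : 0 < c) :
    ∫ x in Ioi (0 : ℝ), x ^ (β - 1) / (x ^ α + c) =
      c ^ (β / α - 1) * (Gamma (β / α) * Gamma (1 - β / α) / α) := by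
  have hα : 0 < α := hβ.trans hβα
  set b := c ^ α⁻¹
  have hb : 0 < b := rpow_pos_of_pos hc _
  have hbα : b ^ α = c := by rw [← rpow_mul hc.le, inv_mul_cancel₀ hα.ne', rpow_one]
  have hpow : c ^ (β / α - 1) = b ^ β / c := by
    rw [← hbα, ← rpow_mul hb.le, ← rpow_sub hb]
    congr 1
    linear_combination mul_div_cancel₀ β hα.ne'
  have hscale := integral_comp_mul_left_Ioi' (fun x => x ^ (β - 1) / (x ^ α + c)) 0 hb
  rw [mul_zero] at hscale
  rw [← hscale, ← integral_Ioi_rpow_div_rpow_add_one hβ hβα, hpow, smul_eq_mul,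
    ← integral_const_mul, ← integral_const_mul]
  refine setIntegral_congr_fun measurableSet_Ioi fun x hx => ?_
  have hx0 : 0 < x := hx
  rw [mul_rpow hb.le hx0.le, mul_rpow hb.le hx0.le, hbα, rpow_sub_one hb.ne']
  field_simp

theorem integral_fun_norm_euclideanSpace_fin_two {E : Type*} [NormedAddCommGroup E]
    [NormedSpace ℝ E] (f : ℝ → E) :
    ∫ x : EuclideanSpace ℝ (Fin 2), f ‖x‖ = (2 * π) • ∫ r in Ioi (0 : ℝ), r • f r := by
  rw [integral_fun_norm_addHaar, finrank_euclideanSpace_fin, measureReal_def,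
    EuclideanSpace.volume_ball_fin_two]
  simp only [ENNReal.ofReal_one, one_pow, one_mul, ENNReal.toReal_ofReal pi_nonneg,
    Nat.reduceSub, pow_one]
  module

theorem stmt_7_general (α a p : ℝ) (hα : 2 < α) (ha : 0 < a) :
    ∫ x : EuclideanSpace ℝ (Fin 2),
        (1 - (p / (1 + a * ‖x‖ ^ (-α)) + 1 - p)) =
      p * π * a ^ (2 / α) * Real.Gamma (1 + 2 / α) * Real.Gamma (1 - 2 / α) := by
  have hradial : ∀ r ∈ Ioi (0 : ℝ), r • (1 - (p / (1 + a * r ^ (-α)) + 1 - p)) =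
      p * a * (r ^ ((2 : ℝ) - 1) / (r ^ α + a)) := by
    intro r hr
    have hrα : 0 < r ^ α := rpow_pos_of_pos hr α
    rw [show (2 : ℝ) - 1 = 1 by norm_num, rpow_one, rpow_neg (le_of_lt hr), smul_eq_mul]
    field_simp
    ring
  rw [integral_fun_norm_euclideanSpace_fin_two (fun r => 1 - (p / (1 + a * r ^ (-α)) + 1 - p)),
    setIntegral_congr_fun measurableSet_Ioi hradial, integral_const_mul,
    integral_Ioi_rpow_div_rpow_add two_pos hα ha, rpow_sub_one ha.ne', add_comm 1,
    Gamma_add_one (by positivity)]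
  simp only [smul_eq_mul]
  field_simp

/-- For `α > 2`, `a > 0` and `p ∈ (0,1]`, the planar integral of
`1 - (p/(1 + a‖x‖^{-α}) + 1 - p)` equals `p π a^{2/α} Γ(1+2/α) Γ(1-2/α)`. -/
theorem stmt_7 (α a p : ℝ) (hα : 2 < α) (ha : 0 < a) (hp : p ∈ Set.Ioc (0 : ℝ) 1) :
    ∫ x : EuclideanSpace ℝ (Fin 2),
        (1 - (p / (1 + a * ‖x‖ ^ (-α)) + 1 - p)) =
      p * π * a ^ (2 / α) * Real.Gamma (1 + 2 / α) * Real.Gamma (1 - 2 / α) :=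
  stmt_7_general α a p hα ha
end

section
/- Given λ, T_s > 0 and ε ∈ (0,1), for each D > 0 there exists a unique N > 0 solving λ(e^{θ}−1)/θ = 1/N where θ = ln(T_s ln(1/ε)/(λD) + 1), and N is strictly increasing in D. -/
/-! With `x = T_s ln(1/ε)/(λD) > 0` we have `e^θ - 1 = x`, so the equation reads
`λ x / ln(1 + x) = 1/N` and forces `N = ln(1 + x)/(λ x)`. Since `x` decreases in `D` and
`ln(1 + x)/x` is a secant slope of the strictly concave logarithm at `1`, hence strictly
decreasing in `x`, this `N` strictly increases in `D`. -/

open Real Set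

lemma strictAntiOn_log_add_one_div_self :
    StrictAntiOn (fun x : ℝ => log (x + 1) / x) (Ioi 0) := by
  intro x (hx : 0 < x) y (hy : 0 < y) hxy
  have hslope := strictConcaveOn_log_Ioi.secant_strict_mono (a := 1) (x := x + 1) (y := y + 1)
    (mem_Ioi.2 one_pos) (by simp only [mem_Ioi]; linarith) (by simp only [mem_Ioi]; linarith)
    (by linarith) (by linarith) (by linarith)
  simpa only [log_one, sub_zero, add_sub_cancel_right] using hslope

lemma mul_exp_log_add_one_sub_one_div_eq_one_div_iff {l x N : ℝ} (hx : -1 < x) :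
    l * (exp (log (x + 1)) - 1) / log (x + 1) = 1 / N ↔ N = log (x + 1) / x / l := by
  rw [exp_log (by linarith), add_sub_cancel_right, one_div, div_div, mul_comm x l, ← inv_div,
    inv_inj, eq_comm]

/-- For each delay bound `D > 0` there is a unique `N > 0` solving the
effective-bandwidth equation `λ (e^θ - 1)/θ = 1/N` with
`θ = ln(T_s ln(1/ε)/(λ D) + 1)`, and this `N` is strictly increasing in `D`. -/
theorem stmt_13 (l Ts ε : ℝ) (hl : 0 < l) (hTs : 0 < Ts) (hε : ε ∈ Set.Ioo (0 : ℝ) 1) :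
    (∀ D : ℝ, 0 < D → ∃! N : ℝ, 0 < N ∧
      (let θ := Real.log (Ts * Real.log (1 / ε) / (l * D) + 1)
       l * (Real.exp θ - 1) / θ = 1 / N)) ∧
    (∀ D₁ D₂ N₁ N₂ : ℝ, 0 < D₁ → D₁ < D₂ →
      (0 < N₁ ∧ (let θ := Real.log (Ts * Real.log (1 / ε) / (l * D₁) + 1)
        l * (Real.exp θ - 1) / θ = 1 / N₁)) →
      (0 < N₂ ∧ (let θ := Real.log (Ts * Real.log (1 / ε) / (l * D₂) + 1)
        l * (Real.exp θ - 1) / θ = 1 / N₂)) →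
      N₁ < N₂) := by
  set c := Ts * log (1 / ε)
  have hc : 0 < c := mul_pos hTs (log_pos (one_lt_one_div hε.1 hε.2))
  have hx : ∀ D : ℝ, 0 < D → 0 < c / (l * D) := fun D hD => by positivity
  have hsol : ∀ D N : ℝ, 0 < D → (l * (exp (log (c / (l * D) + 1)) - 1) /
      log (c / (l * D) + 1) = 1 / N ↔ N = log (c / (l * D) + 1) / (c / (l * D)) / l) :=
    fun D N hD => mul_exp_log_add_one_sub_one_div_eq_one_div_iff (by linarith [hx D hD])
  refine ⟨fun D hD => ?_, fun D₁ D₂ N₁ N₂ hD₁ hD₁₂ ⟨_, h₁⟩ ⟨_, h₂⟩ => ?_⟩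
  · simp only [hsol D _ hD]
    have hlog : 0 < log (c / (l * D) + 1) := log_pos (by linarith [hx D hD])
    exact ⟨_, ⟨div_pos (div_pos hlog (hx D hD)) hl, rfl⟩, fun N hN => hN.2⟩
  · have hD₂ : 0 < D₂ := hD₁.trans hD₁₂
    rw [(hsol D₁ N₁ hD₁).1 h₁, (hsol D₂ N₂ hD₂).1 h₂]
    have hx₂₁ : c / (l * D₂) < c / (l * D₁) :=
      div_lt_div_of_pos_left hc (by positivity) (mul_lt_mul_of_pos_left hD₁₂ hl)
    exact div_lt_div_of_pos_right
      (strictAntiOn_log_add_one_div_self (hx D₂ hD₂) (hx D₁ hD₁) hx₂₁) hl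
end

section
/- For fixed positive constants T, W, a, the map γ ↦ √(TW/V(γ)) · (ln(1+γ) − a ln 2/(TW)), where V(γ) = 1 − (1+γ)^{−2}, is strictly increasing on (0, ∞). -/
/-!
Substitute `x = 1 + γ > 1`. Since `1 - x⁻² = (x² - 1) / x²`, the map is
`√(TW) · h(x)` with `h(x) = x (ln x - c) / √(x² - 1)` and `c = a ln 2 / (TW) ≥ 0`.
A direct computation gives `h'(x) = (x² - 1 - (ln x - c)) / √(x² - 1)³`, and the numerator
is positive because `ln x < x - 1 < x² - 1` for `x > 1`.
-/

open Real Set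

lemma sqrt_div_one_sub_zpow_neg_two {k x : ℝ} (hk : 0 ≤ k) (hx : 1 < x) :
    √(k / (1 - x ^ (-2 : ℤ))) = √k * (x / √(x ^ 2 - 1)) := by
  have hx0 : 0 < x := by linarith
  have hV : 1 - x ^ (-2 : ℤ) = (x ^ 2 - 1) / x ^ 2 := by
    rw [zpow_neg, zpow_ofNat]
    field_simp
  rw [hV, div_div_eq_mul_div, mul_div_assoc, sqrt_mul hk, sqrt_div' _ (by nlinarith),
    sqrt_sq hx0.le]

lemma log_sub_lt_sq_sub_one {x c : ℝ} (hx : 1 < x) (hc : 0 ≤ c) : log x - c < x ^ 2 - 1 := by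
  have := log_lt_sub_one_of_pos (by linarith) hx.ne'
  nlinarith

lemma hasDerivAt_mul_log_sub_div_sqrt (c : ℝ) {x : ℝ} (hx : 1 < x) :
    HasDerivAt (fun x => x * (log x - c) / √(x ^ 2 - 1))
      ((x ^ 2 - 1 - (log x - c)) / √(x ^ 2 - 1) ^ 3) x := by
  have hs : 0 < x ^ 2 - 1 := by nlinarith
  have hsqrt : 0 < √(x ^ 2 - 1) := sqrt_pos.mpr hs
  have hnum : HasDerivAt (fun x => x * (log x - c)) (1 * (log x - c) + x * x⁻¹) x :=
    (hasDerivAt_id x).mul ((hasDerivAt_log (by linarith)).sub_const c)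
  have hden : HasDerivAt (fun x => √(x ^ 2 - 1)) (2 * x ^ 1 * 1 / (2 * √(x ^ 2 - 1))) x := by
    simpa using (((hasDerivAt_id x).pow 2).sub_const 1).sqrt hs.ne'
  refine (hnum.div hden hsqrt.ne').congr_deriv ?_
  field_simp
  rw [sq_sqrt hs.le]
  ring

lemma strictMonoOn_mul_log_sub_div_sqrt {c : ℝ} (hc : 0 ≤ c) :
    StrictMonoOn (fun x => x * (log x - c) / √(x ^ 2 - 1)) (Ioi 1) := by
  refine strictMonoOn_of_hasDerivWithinAt_pos (convex_Ioi 1)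
    (fun x hx => (hasDerivAt_mul_log_sub_div_sqrt c hx).continuousAt.continuousWithinAt)
    (fun x hx => (hasDerivAt_mul_log_sub_div_sqrt c ?_).hasDerivWithinAt) fun x hx => ?_
  · rwa [interior_Ioi] at hx
  · rw [interior_Ioi] at hx
    have hs : 0 < x ^ 2 - 1 := by nlinarith [mem_Ioi.mp hx]
    exact div_pos (sub_pos.mpr (log_sub_lt_sq_sub_one hx hc)) (by positivity)

/-- The argument of the Q-function in the decoding error probability,
`γ ↦ √(TW/V(γ)) (ln(1+γ) - a ln 2/(TW))` with `V(γ) = 1 - (1+γ)^{-2}`,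
is strictly increasing on `(0,∞)`. -/
theorem stmt_15 (T W a : ℝ) (hT : 0 < T) (hW : 0 < W) (ha : 0 < a) :
    StrictMonoOn (fun γ : ℝ =>
        Real.sqrt (T * W / (1 - (1 + γ) ^ (-2 : ℤ))) *
          (Real.log (1 + γ) - a * Real.log 2 / (T * W)))
      (Set.Ioi 0) := by
  have hTW : 0 < T * W := mul_pos hT hW
  set c := a * log 2 / (T * W)
  have hc : 0 ≤ c := by positivity
  have hshift : StrictMonoOn
      (fun γ => √(T * W) * ((1 + γ) * (log (1 + γ) - c) / √((1 + γ) ^ 2 - 1))) (Ioi 0) :=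
    fun x hx y hy hxy => mul_lt_mul_of_pos_left (strictMonoOn_mul_log_sub_div_sqrt hc
      (by simpa using hx) (by simpa using hy) (by linarith)) (sqrt_pos.mpr hTW)
  refine hshift.congr fun γ hγ => ?_
  simp only
  rw [sqrt_div_one_sub_zpow_neg_two hTW.le (by simpa using hγ)]
  ring
end
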